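/- The map ~ : Γ_P → P⊗ker ε intertwines the right coactions: Δ_R ∘ ~ = (~⊗id) ∘ Δ_R, where Γ_P carries the coaction induced from Δ_R on P⊗P and P⊗ker ε carries the coaction Δ_R(u⊗a) = Σ u^(1̄)⊗a₍₂₎⊗u^(2̄)(Sa₍₁₎)a₍₃₎. -/

import Mathlib

open TensorProduct

/-- The right adjoint coaction a ↦ Σ a₍₂₎ ⊗ (Sa₍₁₎)a₍₃₎. -/
noncomputable def AdR (k A : Type*) [Field k] [Ring A] [HopfAlgebra k A] :
    A →ₗ[k] A ⊗[k] A :=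
  (LinearMap.lTensor A (LinearMap.mul' k A)) ∘ₗ
    (TensorProduct.assoc k A A A).toLinearMap ∘ₗ
    (LinearMap.rTensor A (TensorProduct.comm k A A).toLinearMap) ∘ₗ
    (TensorProduct.assoc k A A A).symm.toLinearMap ∘ₗ
    (LinearMap.rTensor (A ⊗[k] A) (HopfAlgebra.antipode (R := k) (A := A))) ∘ₗ
    (LinearMap.lTensor A (Coalgebra.comul (R := k) (A := A))) ∘ₗ
    (Coalgebra.comul (R := k) (A := A))

/-- The map ~ = (·⊗id)∘(id⊗Δ_R) on universal one-forms (defined on all of P⊗P). -/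
noncomputable def tildeMap {k A P : Type*} [Field k] [Ring A] [HopfAlgebra k A]
    [Ring P] [Algebra k P] (ΔR : P →ₐ[k] P ⊗[k] A) :
    P ⊗[k] P →ₗ[k] P ⊗[k] A :=
  (LinearMap.rTensor A (LinearMap.mul' k P)) ∘ₗ
    (TensorProduct.assoc k P P A).symm.toLinearMap ∘ₗ
    (LinearMap.lTensor P ΔR.toLinearMap)

/-- The diagonal coaction of A on P⊗P: u⊗v ↦ Σ u^(1̄)⊗v^(1̄)⊗u^(2̄)v^(2̄). -/
noncomputable def diagCoaction {k A P : Type*} [Field k] [Ring A] [HopfAlgebra k A]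
    [Ring P] [Algebra k P] (ΔR : P →ₐ[k] P ⊗[k] A) :
    P ⊗[k] P →ₗ[k] (P ⊗[k] P) ⊗[k] A :=
  (LinearMap.lTensor (P ⊗[k] P) (LinearMap.mul' k A)) ∘ₗ
    (TensorProduct.tensorTensorTensorComm k P A P A).toLinearMap ∘ₗ
    (TensorProduct.map ΔR.toLinearMap ΔR.toLinearMap)

/-- The coaction of A on P⊗A: u⊗a ↦ Σ (u^(1̄)⊗a₍₂₎) ⊗ u^(2̄)(Sa₍₁₎)a₍₃₎. -/
noncomputable def coactionPA {k A P : Type*} [Field k] [Ring A] [HopfAlgebra k A]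
    [Ring P] [Algebra k P] (ΔR : P →ₐ[k] P ⊗[k] A) :
    P ⊗[k] A →ₗ[k] (P ⊗[k] A) ⊗[k] A :=
  (LinearMap.lTensor (P ⊗[k] A) (LinearMap.mul' k A)) ∘ₗ
    (TensorProduct.tensorTensorTensorComm k P A A A).toLinearMap ∘ₗ
    (TensorProduct.map ΔR.toLinearMap (AdR k A))

/-! Since `~(u ⊗ v) = (u ⊗ 1)·Δ_R(v)`, both sides of the identity at `u ⊗ v` are
`ι(Δ_R u)` times their value at `1 ⊗ v`, where `ι : P ⊗ A → (P ⊗ A) ⊗ A` is the algebra map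
`p ⊗ b ↦ (p ⊗ 1) ⊗ b`. So it suffices that the coaction of `P ⊗ A` sends `Δ_R v` to
`(Δ_R ⊗ id)(Δ_R v)`. After coassociativity this is the Hopf identity
`Σ (1 ⊗ a₍₁₎)·Ad_R(a₍₂₎) = Δa`, i.e. `Σ a₍₃₎ ⊗ a₍₁₎S(a₍₂₎)a₍₄₎ = Σ a₍₁₎ ⊗ a₍₂₎`,
which holds because `Σ a₍₁₎S(a₍₂₎) = ε(a)`. -/

open Coalgebra HopfAlgebra
open Algebra.TensorProduct (includeLeft includeRight rTensor)

section Hopf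

variable {k A : Type*} [Field k] [Ring A] [HopfAlgebra k A]

theorem AdR_apply (a : A) :
    AdR k A a = LinearMap.mul' k (A ⊗[k] A)
      (TensorProduct.map ((includeRight : A →ₐ[k] A ⊗[k] A).toLinearMap ∘ₗ antipode k)
        comul (comul a)) := by
  simp only [AdR, LinearMap.comp_apply]
  induction comul (R := k) a using TensorProduct.induction_on with
  | zero => simp
  | add x y hx hy => simp only [map_add, hx, hy]
  | tmul x y =>
    simp only [LinearMap.lTensor_tmul, LinearMap.rTensor_tmul, TensorProduct.map_tmul]
    induction comul (R := k) y using TensorProduct.induction_on with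
    | zero => simp
    | add x y hx hy => simp only [tmul_add, map_add, hx, hy]
    | tmul b c => simp [LinearMap.mul'_apply]

theorem mul'_map_includeRight_AdR_comul (a : A) :
    LinearMap.mul' k (A ⊗[k] A)
      (TensorProduct.map (includeRight : A →ₐ[k] A ⊗[k] A).toLinearMap (AdR k A) (comul a)) =
      comul a := by
  set Ψ : A ⊗[k] A →ₗ[k] A ⊗[k] A := LinearMap.mul' k (A ⊗[k] A) ∘ₗ
    TensorProduct.map (includeRight : A →ₐ[k] A ⊗[k] A).toLinearMap comul
  set N : A ⊗[k] (A ⊗[k] A) →ₗ[k] A ⊗[k] A :=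
    (LinearMap.mul' k A ∘ₗ (antipode k).lTensor A).rTensor A ∘ₗ
      (TensorProduct.assoc k A A A).symm.toLinearMap
  have h_twist : ∀ z : A ⊗[k] A, LinearMap.mul' k (A ⊗[k] A)
      (TensorProduct.map (includeRight : A →ₐ[k] A ⊗[k] A).toLinearMap (AdR k A) z) =
      Ψ (N (comul.lTensor A z)) := by
    intro z
    induction z using TensorProduct.induction_on with
    | zero => simp
    | add x y hx hy => simp only [map_add, hx, hy]
    | tmul x y =>
      simp only [TensorProduct.map_tmul, LinearMap.lTensor_tmul, AdR_apply]
      induction comul (R := k) y using TensorProduct.induction_on with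
      | zero => simp
      | add x y hx hy => simp only [tmul_add, map_add, hx, hy]
      | tmul b c =>
        simp [Ψ, N, LinearMap.mul'_apply, ← mul_assoc, Algebra.TensorProduct.tmul_mul_tmul]
  have h_counit : N (comul.lTensor A (comul a)) = 1 ⊗ₜ a := by
    simp only [N, LinearMap.comp_apply, LinearEquiv.coe_coe, coassoc_symm_apply,
      ← LinearMap.rTensor_comp_apply, LinearMap.comp_assoc, mul_antipode_lTensor_comul]
    rw [LinearMap.rTensor_comp_apply, rTensor_counit_comul, LinearMap.rTensor_tmul,
      Algebra.linearMap_apply, map_one]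
  rw [h_twist, h_counit]
  simp [Ψ, ← Algebra.TensorProduct.one_def]

end Hopf

section Comodule

variable {k A P : Type*} [Field k] [Ring A] [HopfAlgebra k A] [Ring P] [Algebra k P]

theorem assoc_symm_tmul_eq_rTensor_includeLeft_mul (p : P) (z : A ⊗[k] A) :
    (TensorProduct.assoc k P A A).symm (p ⊗ₜ z) =
      rTensor A (includeLeft (S := k)) (p ⊗ₜ 1) * rTensor A includeRight z := by
  induction z using TensorProduct.induction_on with
  | zero => simp
  | add x y hx hy => simp only [tmul_add, map_add, hx, hy, mul_add]
  | tmul x y => simp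

theorem mul'_map_AdR_assoc_symm_lTensor_comul (x : P ⊗[k] A) :
    LinearMap.mul' k ((P ⊗[k] A) ⊗[k] A)
      (TensorProduct.map (rTensor A (includeLeft (S := k))).toLinearMap
        ((rTensor A includeRight).toLinearMap ∘ₗ AdR k A)
        ((TensorProduct.assoc k P A A).symm (comul.lTensor P x))) =
      (TensorProduct.assoc k P A A).symm (comul.lTensor P x) := by
  induction x using TensorProduct.induction_on with
  | zero => simp
  | add x y hx hy => simp only [map_add, hx, hy]
  | tmul p a =>
    rw [LinearMap.lTensor_tmul]
    conv_rhs => rw [assoc_symm_tmul_eq_rTensor_includeLeft_mul, ← mul'_map_includeRight_AdR_comul]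
    induction comul (R := k) a using TensorProduct.induction_on with
    | zero => simp
    | add x y hx hy => simp only [tmul_add, map_add, hx, hy, mul_add]
    | tmul x y =>
      simp only [LinearMap.comp_apply, TensorProduct.assoc_symm_tmul,
        TensorProduct.map_tmul, AlgHom.toLinearMap_apply, LinearMap.mul'_apply, map_mul,
        ← mul_assoc]
      congr 1
      simp

variable (ΔR : P →ₐ[k] P ⊗[k] A)

theorem coactionPA_tmul (p : P) (a : A) :
    coactionPA ΔR (p ⊗ₜ a) =
      rTensor A (includeLeft (S := k)) (ΔR p) * rTensor A includeRight (AdR k A a) := by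
  simp only [coactionPA, LinearMap.comp_apply, TensorProduct.map_tmul, AlgHom.toLinearMap_apply]
  induction ΔR p using TensorProduct.induction_on with
  | zero => simp
  | add x y hx hy => simp only [add_tmul, map_add, hx, hy, add_mul]
  | tmul q b =>
    induction AdR k A a using TensorProduct.induction_on with
    | zero => simp
    | add x y hx hy => simp only [tmul_add, map_add, hx, hy, mul_add]
    | tmul x y => simp [LinearMap.mul'_apply]

theorem coactionPA_includeLeft_mul (u : P) (x : P ⊗[k] A) :
    coactionPA ΔR (includeLeft (S := k) u * x) =
      rTensor A (includeLeft (S := k)) (ΔR u) * coactionPA ΔR x := by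
  induction x using TensorProduct.induction_on with
  | zero => simp
  | add x y hx hy => simp only [mul_add, map_add, hx, hy]
  | tmul p a =>
    rw [Algebra.TensorProduct.includeLeft_apply, Algebra.TensorProduct.tmul_mul_tmul, one_mul,
      coactionPA_tmul, coactionPA_tmul, map_mul, map_mul, mul_assoc]

theorem coactionPA_apply_coaction
    (hcoassoc : (TensorProduct.assoc k P A A).toLinearMap ∘ₗ
        (ΔR.toLinearMap.rTensor A) ∘ₗ ΔR.toLinearMap =
        ((Coalgebra.comul (R := k) (A := A)).lTensor P) ∘ₗ ΔR.toLinearMap) (v : P) :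
    coactionPA ΔR (ΔR v) = ΔR.toLinearMap.rTensor A (ΔR v) := by
  have h_factor : ∀ x, coactionPA ΔR x = LinearMap.mul' k ((P ⊗[k] A) ⊗[k] A)
      (TensorProduct.map (rTensor A (includeLeft (S := k))).toLinearMap
        ((rTensor A includeRight).toLinearMap ∘ₗ AdR k A) (ΔR.toLinearMap.rTensor A x)) := by
    intro x
    induction x using TensorProduct.induction_on with
    | zero => simp
    | add x y hx hy => simp only [map_add, hx, hy]
    | tmul p a =>
      simp only [coactionPA_tmul, LinearMap.comp_apply, LinearMap.rTensor_tmul,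
        TensorProduct.map_tmul, AlgHom.toLinearMap_apply, LinearMap.mul'_apply]
  have h_coassoc : ΔR.toLinearMap.rTensor A (ΔR v) =
      (TensorProduct.assoc k P A A).symm (comul.lTensor P (ΔR v)) := by
    rw [LinearEquiv.eq_symm_apply]
    exact LinearMap.congr_fun hcoassoc v
  rw [h_factor, h_coassoc, mul'_map_AdR_assoc_symm_lTensor_comul]

theorem tildeMap_tmul (u v : P) : tildeMap ΔR (u ⊗ₜ v) = includeLeft (S := k) u * ΔR v := by
  simp only [tildeMap, LinearMap.comp_apply, LinearMap.lTensor_tmul, AlgHom.toLinearMap_apply]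
  induction ΔR v using TensorProduct.induction_on with
  | zero => simp
  | add x y hx hy => simp only [tmul_add, map_add, hx, hy, mul_add]
  | tmul q b => simp [LinearMap.mul'_apply]

theorem rTensor_tildeMap_diagCoaction_tmul (u v : P) :
    (tildeMap ΔR).rTensor A (diagCoaction ΔR (u ⊗ₜ v)) =
      rTensor A (includeLeft (S := k)) (ΔR u) * ΔR.toLinearMap.rTensor A (ΔR v) := by
  simp only [diagCoaction, LinearMap.comp_apply, TensorProduct.map_tmul, AlgHom.toLinearMap_apply]
  induction ΔR u using TensorProduct.induction_on with
  | zero => simp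
  | add x y hx hy => simp only [add_tmul, map_add, hx, hy, add_mul]
  | tmul p a =>
    induction ΔR v using TensorProduct.induction_on with
    | zero => simp
    | add x y hx hy => simp only [tmul_add, map_add, hx, hy, mul_add]
    | tmul q b => simp [LinearMap.mul'_apply, tildeMap_tmul]

end Comodule

theorem tilde_intertwines_coactions_general
    {k A P : Type*} [Field k] [Ring A] [HopfAlgebra k A]
    [Ring P] [Algebra k P]
    (ΔR : P →ₐ[k] P ⊗[k] A)
    (hcoassoc : (TensorProduct.assoc k P A A).toLinearMap ∘ₗ
        (ΔR.toLinearMap.rTensor A) ∘ₗ ΔR.toLinearMap =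
        ((Coalgebra.comul (R := k) (A := A)).lTensor P) ∘ₗ ΔR.toLinearMap) :
    coactionPA ΔR ∘ₗ tildeMap ΔR = ((tildeMap ΔR).rTensor A) ∘ₗ diagCoaction ΔR := by
  refine TensorProduct.ext' fun u v => ?_
  rw [LinearMap.comp_apply, LinearMap.comp_apply, tildeMap_tmul, coactionPA_includeLeft_mul,
    coactionPA_apply_coaction ΔR hcoassoc, rTensor_tildeMap_diagCoaction_tmul]

theorem tilde_intertwines_coactions
    {k A P : Type*} [Field k] [Ring A] [HopfAlgebra k A]
    [Ring P] [Algebra k P]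
    (ΔR : P →ₐ[k] P ⊗[k] A)
    (hcoassoc : (TensorProduct.assoc k P A A).toLinearMap ∘ₗ
        (ΔR.toLinearMap.rTensor A) ∘ₗ ΔR.toLinearMap =
        ((Coalgebra.comul (R := k) (A := A)).lTensor P) ∘ₗ ΔR.toLinearMap)
    (hcounit : (TensorProduct.rid k P).toLinearMap ∘ₗ
        ((Coalgebra.counit (R := k) (A := A)).lTensor P) ∘ₗ ΔR.toLinearMap =
        LinearMap.id) :
    coactionPA ΔR ∘ₗ tildeMap ΔR = ((tildeMap ΔR).rTensor A) ∘ₗ diagCoaction ΔR :=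
  tilde_intertwines_coactions_general ΔR hcoassoc
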